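/- Let K be a nonempty subset of L²(Ω, G; ℝ^d) for a sub-σ-algebra G. Then the closed convex decomposable hull satisfies cl( conv( dec_G(K) ) ) = cl( { Σ_{i=1}^n λ_i ζ^i : n ∈ ℕ, ζ^1,…,ζ^n ∈ K, λ ∈ L²(Ω,G;ℝ^n) with λ(ω) ∈ Δ^{n−1} a.s. } ), where the closure is taken in L². -/

import Mathlib

open MeasureTheory ENNReal Filter

/-- The `G`-decomposable hull of a set `K` of functions. -/
def decHull {Ω E : Type*} [AddCommMonoid E] (G : MeasurableSpace Ω)
    (K : Set (Ω → E)) : Set (Ω → E) :=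
  { g | ∃ (n : ℕ) (ξ : Fin n → Ω → E) (A : Fin n → Set Ω),
      (∀ i, ξ i ∈ K) ∧ (∀ i, MeasurableSet[G] (A i)) ∧
      Pairwise (Function.onFun Disjoint A) ∧ (⋃ i, A i) = Set.univ ∧
      g = fun ω => ∑ i, (A i).indicator (ξ i) ω }

/-- The set of random convex combinations of elements of `K`, with `G`-measurable
square-integrable random weights valued a.s. in the unit simplex. -/
def randConvComb {Ω E : Type*} {mΩ : MeasurableSpace Ω} [NormedAddCommGroup E]
    [NormedSpace ℝ E] (μ : Measure Ω) (G : MeasurableSpace Ω)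
    (K : Set (Ω → E)) : Set (Ω → E) :=
  { g | ∃ (n : ℕ) (ζ : Fin n → Ω → E) (lam : Ω → Fin n → ℝ),
      (∀ i, ζ i ∈ K) ∧ StronglyMeasurable[G] lam ∧ MemLp lam 2 μ ∧
      (∀ᵐ ω ∂μ, (∀ i, 0 ≤ lam ω i) ∧ ∑ i, lam ω i = 1) ∧
      g = fun ω => ∑ i, lam ω i • ζ i ω }

/-- The closure of a set of functions in the `L²`-norm. -/
def L2Closure {Ω E : Type*} {mΩ : MeasurableSpace Ω} [NormedAddCommGroup E]
    (μ : Measure Ω) (S : Set (Ω → E)) : Set (Ω → E) :=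
  { g | AEStronglyMeasurable g μ ∧
      ∃ f : ℕ → Ω → E, (∀ k, f k ∈ S) ∧
        Tendsto (fun k => eLpNorm (f k - g) 2 μ) atTop (nhds 0) }

/-!
The inclusion `⊆` holds because `dec_G(K)` consists of random convex combinations with
indicator weights, and random convex combinations form a convex set. For `⊇`, approximate the
weights `λ` pointwise by `G`-simple functions `σₘ` with values in the simplex. On each of the
finitely many `G`-measurable level sets of `σₘ`, `∑ σₘ,ᵢ ζⁱ` is a deterministic convex combination
of elements of `K`, so it is a `G`-measurable gluing of elements of `conv dec_G(K)`. That set stays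
in `conv dec_G(K)` because the convex hull of a decomposable set is decomposable. The domination
`‖∑ (σₘ,ᵢ - λᵢ) ζⁱ‖ ≤ 2 ∑ ‖ζⁱ‖` turns pointwise convergence into `L²` convergence.
-/

open Topology

section Decomposable

variable {Ω E : Type*}

def IsDecomposable (G : MeasurableSpace Ω) (S : Set (Ω → E)) : Prop :=
  ∀ ⦃s : Set Ω⦄ [DecidablePred (· ∈ s)], MeasurableSet[G] s →
    ∀ ⦃g⦄, g ∈ S → ∀ ⦃h⦄, h ∈ S → s.piecewise g h ∈ S

variable {G : MeasurableSpace Ω}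

theorem convex_setOf_piecewise_mem {𝕜 : Type*} [Semiring 𝕜] [PartialOrder 𝕜] [AddCommMonoid E]
    [Module 𝕜 E] {T : Set (Ω → E)} (hT : Convex 𝕜 T) (s : Set Ω) [DecidablePred (· ∈ s)]
    (h : Ω → E) : Convex 𝕜 {g | s.piecewise g h ∈ T} := by
  intro g₁ hg₁ g₂ hg₂ a b ha hb hab
  have hcomb : s.piecewise (a • g₁ + b • g₂) h = a • s.piecewise g₁ h + b • s.piecewise g₂ h := by
    ext ω
    by_cases hω : ω ∈ s <;> simp [hω, ← add_smul, hab]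
  simpa only [Set.mem_ofPred_eq, hcomb] using hT hg₁ hg₂ ha hb hab

theorem IsDecomposable.convexHull {𝕜 : Type*} [Semiring 𝕜] [PartialOrder 𝕜] [AddCommMonoid E]
    [Module 𝕜 E] {S : Set (Ω → E)} (hS : IsDecomposable G S) :
    IsDecomposable G (_root_.convexHull 𝕜 S) := by
  have hleft : ∀ ⦃s : Set Ω⦄ [DecidablePred (· ∈ s)], MeasurableSet[G] s →
      ∀ ⦃g⦄, g ∈ _root_.convexHull 𝕜 S → ∀ ⦃h⦄, h ∈ S → s.piecewise g h ∈ _root_.convexHull 𝕜 S :=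
    fun s _ hs g hg h hh => convexHull_min
      (fun g' hg' => show s.piecewise g' h ∈ _ from subset_convexHull 𝕜 S (hS hs hg' hh))
      (convex_setOf_piecewise_mem (convex_convexHull 𝕜 S) s h) hg
  intro s _ hs g hg h hh
  have hright : Convex 𝕜 {h | sᶜ.piecewise h g ∈ _root_.convexHull 𝕜 S} :=
    convex_setOf_piecewise_mem (convex_convexHull 𝕜 S) sᶜ g
  have : sᶜ.piecewise h g ∈ _root_.convexHull 𝕜 S := convexHull_min (fun h' hh' => by
    rw [Set.mem_ofPred_eq, Set.piecewise_compl]; exact hleft hs hg hh') hright hh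
  rwa [Set.piecewise_compl] at this

theorem IsDecomposable.mem_of_finite_range {S : Set (Ω → E)} (hS : IsDecomposable G S)
    (hne : S.Nonempty) {α : Type*} [MeasurableSpace α] [MeasurableSingletonClass α]
    {σ : Ω → α} (hσ : Measurable[G] σ) (hσfin : (Set.range σ).Finite) {f : α → Ω → E}
    (hf : ∀ ω, f (σ ω) ∈ S) : (fun ω => f (σ ω) ω) ∈ S := by
  classical
  obtain ⟨g₀, hg₀⟩ := hne
  suffices H : ∀ t : Finset α, ↑t ⊆ Set.range σ →
      (fun ω => if σ ω ∈ t then f (σ ω) ω else g₀ ω) ∈ S by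
    simpa using H hσfin.toFinset (by simp)
  intro t
  induction t using Finset.induction_on with
  | empty => simpa using hg₀
  | insert a t _ ih =>
    intro ht
    rw [Finset.coe_insert, Set.insert_subset_iff] at ht
    obtain ⟨⟨ω₀, rfl⟩, ht⟩ := ht
    convert hS (hσ (measurableSet_singleton (σ ω₀))) (hf ω₀) (ih ht) using 1
    ext ω
    by_cases hω : σ ω = σ ω₀ <;> simp [hω, Set.piecewise]

end Decomposable

section DecHull

variable {Ω E : Type*} [AddCommMonoid E] {G : MeasurableSpace Ω} {K : Set (Ω → E)}

theorem sum_indicator_apply_of_mem {ι : Type*} [Fintype ι] {A : ι → Set Ω}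
    (hA : Pairwise (Function.onFun Disjoint A)) (ξ : ι → Ω → E) {i : ι} {ω : Ω} (hω : ω ∈ A i) :
    ∑ j, (A j).indicator (ξ j) ω = ξ i ω := by
  rw [Fintype.sum_eq_single i fun j hj => Set.indicator_of_notMem
    (Set.disjoint_left.mp (hA hj.symm) hω) _, Set.indicator_of_mem hω]

theorem mem_decHull_iff {g : Ω → E} :
    g ∈ decHull G K ↔ ∃ (n : ℕ) (ξ : Fin n → Ω → E) (τ : Ω → Fin n),
      (∀ i, ξ i ∈ K) ∧ Measurable[G] τ ∧ g = fun ω => ξ (τ ω) ω := by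
  constructor
  · rintro ⟨n, ξ, A, hξ, hA, hdisj, hcover, rfl⟩
    have hmem : ∀ ω, ∃ i, ω ∈ A i := fun ω => Set.mem_iUnion.mp (hcover ▸ Set.mem_univ ω)
    choose τ hτ using hmem
    have hfiber : ∀ i, τ ⁻¹' {i} = A i := fun i => Set.ext fun ω =>
      ⟨fun h => h ▸ hτ ω, fun h => by_contra fun hne =>
        Set.disjoint_left.mp (hdisj hne) (hτ ω) h⟩
    refine ⟨n, ξ, τ, hξ, measurable_to_countable' fun i => hfiber i ▸ hA i, ?_⟩
    ext ω
    exact sum_indicator_apply_of_mem hdisj ξ (hτ ω)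
  · rintro ⟨n, ξ, τ, hξ, hτ, rfl⟩
    have hdisj : Pairwise (Function.onFun Disjoint fun i => τ ⁻¹' {i}) := fun i j hij =>
      (Set.disjoint_singleton.mpr hij).preimage τ
    refine ⟨n, ξ, fun i => τ ⁻¹' {i}, hξ, fun i => hτ (measurableSet_singleton i), hdisj,
      Set.iUnion_eq_univ_iff.mpr fun ω => ⟨τ ω, rfl⟩, ?_⟩
    ext ω
    exact (sum_indicator_apply_of_mem hdisj ξ rfl).symm

theorem subset_decHull : K ⊆ decHull G K := fun f hf =>
  mem_decHull_iff.mpr ⟨1, fun _ => f, fun _ => 0, fun _ => hf, measurable_const, rfl⟩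

theorem isDecomposable_decHull : IsDecomposable G (decHull G K) := by
  intro s _ hs g hg h hh
  obtain ⟨n, ξ, τ, hξ, hτ, rfl⟩ := mem_decHull_iff.mp hg
  obtain ⟨n', ξ', τ', hξ', hτ', rfl⟩ := mem_decHull_iff.mp hh
  refine mem_decHull_iff.mpr ⟨n + n', Fin.append ξ ξ',
    s.piecewise (Fin.castAdd n' ∘ τ) (Fin.natAdd n ∘ τ'),
    Fin.addCases (by simpa using hξ) (by simpa using hξ'),
    Measurable.piecewise hs (measurable_from_top.comp hτ) (measurable_from_top.comp hτ'), ?_⟩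
  ext ω
  by_cases hω : ω ∈ s <;> simp [hω]

end DecHull

section RandConvComb

variable {Ω F : Type*} {mΩ : MeasurableSpace Ω} {μ : Measure Ω} [NormedAddCommGroup F]
  [NormedSpace ℝ F] {G : MeasurableSpace Ω} {K : Set (Ω → F)}

theorem stronglyMeasurable_sum_smul {ι : Type*} [Fintype ι] {lam : Ω → ι → ℝ}
    (hlam : StronglyMeasurable[G] lam) {ζ : ι → Ω → F} (hζ : ∀ i, StronglyMeasurable[G] (ζ i)) :
    StronglyMeasurable[G] (fun ω => ∑ i, lam ω i • ζ i ω) :=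
  Finset.stronglyMeasurable_fun_sum _ fun i _ =>
    ((continuous_apply i).comp_stronglyMeasurable hlam).smul (hζ i)

theorem stronglyMeasurable_of_mem_randConvComb (hK : ∀ f ∈ K, StronglyMeasurable[G] f)
    {g : Ω → F} (hg : g ∈ randConvComb μ G K) : StronglyMeasurable[G] g := by
  obtain ⟨n, ζ, lam, hζ, hlam, -, -, rfl⟩ := hg
  exact stronglyMeasurable_sum_smul hlam fun i => hK _ (hζ i)

theorem mem_randConvComb_of [IsFiniteMeasure μ] (hG : G ≤ mΩ) {ι : Type*} [Fintype ι]
    {ζ : ι → Ω → F} (hζ : ∀ i, ζ i ∈ K) {lam : Ω → ι → ℝ} (hlam : Measurable[G] lam)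
    (hae : ∀ᵐ ω ∂μ, lam ω ∈ stdSimplex ℝ ι) :
    (fun ω => ∑ i, lam ω i • ζ i ω) ∈ randConvComb μ G K := by
  let e := (Fintype.equivFin ι).symm
  have hlam' : StronglyMeasurable[G] fun ω k => lam ω (e k) :=
    (measurable_pi_lambda _ fun k => (measurable_pi_apply _).comp hlam).stronglyMeasurable
  have hae' : ∀ᵐ ω ∂μ, (fun k => lam ω (e k)) ∈ stdSimplex ℝ _ := hae.mono fun ω hω =>
    ⟨fun k => hω.1 _, (e.sum_comp (lam ω)).trans hω.2⟩
  refine ⟨_, fun k => ζ (e k), _, fun k => hζ _, hlam',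
    MemLp.of_bound (hlam'.mono hG).aestronglyMeasurable 1 (hae'.mono fun ω hω => ?_), hae', ?_⟩
  · simpa using stdSimplex_subset_closedBall hω
  · ext ω
    exact (e.sum_comp fun i => lam ω i • ζ i ω).symm

theorem decHull_subset_randConvComb [IsFiniteMeasure μ] (hG : G ≤ mΩ) :
    decHull G K ⊆ randConvComb μ G K := by
  intro g hg
  obtain ⟨n, ξ, τ, hξ, hτ, rfl⟩ := mem_decHull_iff.mp hg
  convert mem_randConvComb_of (μ := μ) hG hξ (lam := fun ω => Pi.single (τ ω) 1)
    ((measurable_from_top (f := fun i => Pi.single i (1 : ℝ))).comp hτ)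
    (.of_forall fun ω => single_mem_stdSimplex ℝ (τ ω)) using 1
  ext ω
  simp [Pi.single_apply, ite_smul]

theorem convex_randConvComb [IsFiniteMeasure μ] (hG : G ≤ mΩ) :
    Convex ℝ (randConvComb μ G K) := by
  rintro _ ⟨n₁, ζ₁, lam₁, hζ₁, hlam₁, -, hae₁, rfl⟩ _ ⟨n₂, ζ₂, lam₂, hζ₂, hlam₂, -, hae₂, rfl⟩
    a b ha hb hab
  convert mem_randConvComb_of (μ := μ) hG (ζ := Sum.elim ζ₁ ζ₂) (Sum.forall.mpr ⟨hζ₁, hζ₂⟩)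
    (lam := fun ω => Sum.elim (a • lam₁ ω) (b • lam₂ ω))
    (measurable_pi_iff.mpr <| Sum.forall.mpr
      ⟨fun i => measurable_const.mul ((measurable_pi_apply i).comp hlam₁.measurable),
       fun i => measurable_const.mul ((measurable_pi_apply i).comp hlam₂.measurable)⟩)
    (by
      filter_upwards [hae₁, hae₂] with ω h₁ h₂
      refine ⟨Sum.forall.mpr ⟨fun i => mul_nonneg ha (h₁.1 i), fun i => mul_nonneg hb (h₂.1 i)⟩,
        ?_⟩
      simp [Fintype.sum_sum_type, ← Finset.mul_sum, h₁.2, h₂.2, hab]) using 1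
  ext ω
  simp [Fintype.sum_sum_type, Finset.smul_sum, smul_smul]

end RandConvComb

section Analysis

variable {Ω F : Type*} {mΩ : MeasurableSpace Ω} {μ : Measure Ω} [NormedAddCommGroup F]

theorem tendsto_eLpNorm_of_dominated {p : ℝ≥0∞} (hp0 : p ≠ 0) (hp : p ≠ ∞) {f : ℕ → Ω → F}
    (hf : ∀ n, AEStronglyMeasurable (f n) μ) {b : Ω → ℝ} (hb : MemLp b p μ)
    (hbound : ∀ n, ∀ᵐ ω ∂μ, ‖f n ω‖ ≤ b ω)
    (hlim : ∀ᵐ ω ∂μ, Tendsto (fun n => f n ω) atTop (𝓝 0)) :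
    Tendsto (fun n => eLpNorm (f n) p μ) atTop (𝓝 0) := by
  have hp' : 0 < p.toReal := ENNReal.toReal_pos hp0 hp
  have hint : Tendsto (fun n => ∫⁻ ω, ‖f n ω‖ₑ ^ p.toReal ∂μ) atTop (𝓝 0) := by
    simpa using tendsto_lintegral_of_dominated_convergence' (f := fun _ => 0)
      (fun ω => ‖b ω‖ₑ ^ p.toReal)
      (fun n => (hf n).enorm.pow_const _)
      (fun n => (hbound n).mono fun ω hω => ENNReal.rpow_le_rpow
        (enorm_le_iff_norm_le.mpr (hω.trans (Real.le_norm_self _))) hp'.le)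
      (lintegral_rpow_enorm_lt_top_of_eLpNorm_lt_top hp0 hp hb.2).ne
      (hlim.mono fun ω hω => by simpa [hp'] using hω.enorm.ennrpow_const p.toReal)
  simp_rw [eLpNorm_eq_lintegral_rpow_enorm_toReal hp0 hp]
  simpa [hp'] using hint.ennrpow_const (1 / p.toReal)

end Analysis

section Approximation

variable {Ω F : Type*} {mΩ : MeasurableSpace Ω} {μ : Measure Ω} [NormedAddCommGroup F]
  [NormedSpace ℝ F]

theorem norm_sum_smul_le_of_mem_stdSimplex {ι : Type*} [Fintype ι] {w : ι → ℝ}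
    (hw : w ∈ stdSimplex ℝ ι) (v : ι → F) :
    ‖∑ i, w i • v i‖ ≤ ∑ i, ‖v i‖ :=
  (norm_sum_le _ _).trans <| Finset.sum_le_sum fun i _ => by
    rw [norm_smul, Real.norm_of_nonneg (hw.1 i)]
    exact mul_le_of_le_one_left (norm_nonneg _) ((stdSimplex_subset_Icc ℝ hw).2 i)

theorem tendsto_eLpNorm_sum_smul_sub {p : ℝ≥0∞} (hp0 : p ≠ 0) (hp : p ≠ ∞) {ι : Type*}
    [Fintype ι] {ζ : ι → Ω → F} (hζ : ∀ i, MemLp (ζ i) p μ) {w : ℕ → Ω → ι → ℝ}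
    {v : Ω → ι → ℝ} (hw : ∀ n, AEStronglyMeasurable (w n) μ) (hv : AEStronglyMeasurable v μ)
    (hwΔ : ∀ n, ∀ᵐ ω ∂μ, w n ω ∈ stdSimplex ℝ ι) (hvΔ : ∀ᵐ ω ∂μ, v ω ∈ stdSimplex ℝ ι)
    (hlim : ∀ᵐ ω ∂μ, Tendsto (fun n => w n ω) atTop (𝓝 (v ω))) :
    Tendsto (fun n => eLpNorm ((fun ω => ∑ i, w n ω i • ζ i ω) - fun ω => ∑ i, v ω i • ζ i ω)
      p μ) atTop (𝓝 0) := by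
  have hmeas : ∀ {u : Ω → ι → ℝ}, AEStronglyMeasurable u μ →
      AEStronglyMeasurable (fun ω => ∑ i, u ω i • ζ i ω) μ := fun hu =>
    Finset.aestronglyMeasurable_fun_sum _ fun i _ =>
      ((continuous_apply i).comp_aestronglyMeasurable hu).smul (hζ i).1
  refine tendsto_eLpNorm_of_dominated hp0 hp (fun n => (hmeas (hw n)).sub (hmeas hv))
    ((memLp_finsetSum Finset.univ fun i _ => (hζ i).norm).const_mul 2) (fun n => ?_) ?_
  · filter_upwards [hwΔ n, hvΔ] with ω hwω hvω
    have h₁ := norm_sum_smul_le_of_mem_stdSimplex hwω fun i => ζ i ω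
    have h₂ := norm_sum_smul_le_of_mem_stdSimplex hvω fun i => ζ i ω
    simp only [Pi.sub_apply]
    linarith [norm_sub_le (∑ i, w n ω i • ζ i ω) (∑ i, v ω i • ζ i ω)]
  · filter_upwards [hlim] with ω hω
    refine tendsto_sub_nhds_zero_iff.mpr (tendsto_finsetSum _ fun i _ => ?_)
    exact (((continuous_apply i).tendsto _).comp hω).smul_const _

end Approximation

section L2Closure

variable {Ω F : Type*} {mΩ : MeasurableSpace Ω} {μ : Measure Ω} [NormedAddCommGroup F]
  {S T : Set (Ω → F)}

theorem L2Closure_mono (h : S ⊆ T) : L2Closure μ S ⊆ L2Closure μ T :=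
  fun _ ⟨hg, f, hf, hlim⟩ => ⟨hg, f, fun k => h (hf k), hlim⟩

theorem L2Closure_subset_of_subset_L2Closure (hT : ∀ f ∈ T, AEStronglyMeasurable f μ)
    (h : S ⊆ L2Closure μ T) : L2Closure μ S ⊆ L2Closure μ T := by
  rintro g ⟨hg, f, hfS, hf⟩
  have happrox : ∀ k : ℕ, ∃ t ∈ T, eLpNorm (t - f k) 2 μ < (k : ℝ≥0∞)⁻¹ := fun k => by
    obtain ⟨-, u, huT, hu⟩ := h (hfS k)
    obtain ⟨j, hj⟩ := (hu.eventually_lt_const (ENNReal.inv_pos.mpr (natCast_ne_top k))).exists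
    exact ⟨u j, huT j, hj⟩
  choose t htT ht using happrox
  refine ⟨hg, t, htT, tendsto_of_tendsto_of_tendsto_of_le_of_le tendsto_const_nhds
    (by simpa using ENNReal.tendsto_inv_nat_nhds_zero.add hf) (fun _ => zero_le) fun k => ?_⟩
  have hfk := (h (hfS k)).1
  calc eLpNorm (t k - g) 2 μ = eLpNorm ((t k - f k) + (f k - g)) 2 μ := by
        rw [sub_add_sub_cancel]
    _ ≤ eLpNorm (t k - f k) 2 μ + eLpNorm (f k - g) 2 μ :=
        eLpNorm_add_le ((hT _ (htT k)).sub hfk) (hfk.sub hg) one_le_two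
    _ ≤ (k : ℝ≥0∞)⁻¹ + eLpNorm (f k - g) 2 μ := add_le_add_left (ht k).le _

end L2Closure

theorem randConvComb_subset_L2Closure {Ω F : Type*} {mΩ : MeasurableSpace Ω} {μ : Measure Ω}
    [NeZero μ] [NormedAddCommGroup F] [NormedSpace ℝ F] {G : MeasurableSpace Ω}
    {K : Set (Ω → F)} (hG : G ≤ mΩ) (hKne : K.Nonempty) (hK : ∀ f ∈ K, StronglyMeasurable[G] f)
    (hKL2 : ∀ f ∈ K, MemLp f 2 μ) :
    randConvComb μ G K ⊆ L2Closure μ (convexHull ℝ (decHull G K)) := by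
  intro g hg
  refine ⟨((stronglyMeasurable_of_mem_randConvComb hK hg).mono hG).aestronglyMeasurable, ?_⟩
  obtain ⟨n, ζ, lam, hζ, hlam, -, hae, rfl⟩ := hg
  obtain ⟨ω₀, hω₀⟩ := hae.exists
  let σ := @SimpleFunc.approxOn _ _ _ _ _ G lam hlam.measurable (stdSimplex ℝ (Fin n)) _ hω₀ _
  have hσΔ : ∀ m ω, σ m ω ∈ stdSimplex ℝ (Fin n) := SimpleFunc.approxOn_mem _ _
  have hcomb : ∀ c ∈ stdSimplex ℝ (Fin n),
      (fun ω => ∑ i, c i • ζ i ω) ∈ convexHull ℝ (decHull G K) := fun c hc => by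
    convert (convex_convexHull ℝ _).sum_mem (fun i _ => hc.1 i) hc.2
      fun i _ => subset_convexHull ℝ _ (subset_decHull (hζ i)) using 1
    ext ω
    simp [Finset.sum_apply]
  refine ⟨fun m ω => ∑ i, σ m ω i • ζ i ω, fun m => ?_, ?_⟩
  · exact isDecomposable_decHull.convexHull.mem_of_finite_range
      (hKne.mono (subset_decHull.trans (subset_convexHull ℝ _))) (σ m).measurable
      (σ m).finite_range (f := fun c ω => ∑ i, c i • ζ i ω) fun ω => hcomb _ (hσΔ m ω)
  · exact tendsto_eLpNorm_sum_smul_sub two_ne_zero ofNat_ne_top (fun i => hKL2 _ (hζ i))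
      (fun m => ((σ m).stronglyMeasurable.mono hG).aestronglyMeasurable)
      (hlam.mono hG).aestronglyMeasurable (fun m => .of_forall (hσΔ m)) hae
      (hae.mono fun ω hω => SimpleFunc.tendsto_approxOn _ _ (subset_closure hω))

/-- The closed convex decomposable hull of `K ⊆ L²(Ω, G; ℝ^d)` coincides with the
`L²`-closure of the set of random convex combinations of elements of `K`. -/
theorem stmt_16 {Ω : Type*} {mΩ : MeasurableSpace Ω} {μ : Measure Ω}
    [IsProbabilityMeasure μ] {d : ℕ} (G : MeasurableSpace Ω) (hG : G ≤ mΩ)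
    (K : Set (Ω → EuclideanSpace ℝ (Fin d))) (hKne : K.Nonempty)
    (hKmeas : ∀ f ∈ K, StronglyMeasurable[G] f) (hKL2 : ∀ f ∈ K, MemLp f 2 μ) :
    L2Closure μ (convexHull ℝ (decHull G K)) = L2Closure μ (randConvComb μ G K) := by
  have hsub : convexHull ℝ (decHull G K) ⊆ randConvComb μ G K :=
    convexHull_min (decHull_subset_randConvComb hG) (convex_randConvComb hG)
  refine (L2Closure_mono hsub).antisymm (L2Closure_subset_of_subset_L2Closure ?_
    (randConvComb_subset_L2Closure hG hKne hKmeas hKL2))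
  exact fun f hf =>
    ((stronglyMeasurable_of_mem_randConvComb hKmeas (hsub hf)).mono hG).aestronglyMeasurable
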